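/- arXiv:1903.02637 — 2 statements merged into one kernel-verified Lean document; each statement's English description precedes it below -/
import Mathlib

section
/- Let f : ℕ^d → ℕ be nondecreasing, let p ∈ ℕ_+, and let D ⊆ ℝ^d_{≥0} be a convex polyhedron whose recession cone recc(D) has dimension d. Suppose that for each congruence class ā ∈ (ℤ/pℤ)^d there exist ∇_ā ∈ ℚ^d and b_ā ∈ ℚ such that f(x) = ∇_ā·x + b_ā for all x ∈ D ∩ ā ∩ ℕ^d. Then all the gradients ∇_ā (for ā ∈ (ℤ/pℤ)^d) are equal, and consequently there is a unique quilt-affine function g : ℕ^d → ℤ with g(x) = f(x) for all x ∈ D ∩ ℕ^d. -/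
/-- A function `g : ℕ^d → ℤ` is quilt-affine if it is nondecreasing and is the sum
of a rational linear function with nonnegative gradient and a periodic offset. -/
def QuiltAffine {d : ℕ} (g : (Fin d → ℕ) → ℤ) : Prop :=
  Monotone g ∧
  ∃ p : ℕ, 0 < p ∧
    ∃ (grad : Fin d → ℚ) (B : (Fin d → ZMod p) → ℚ),
      (∀ i, 0 ≤ grad i) ∧
      ∀ x : Fin d → ℕ,
        (g x : ℚ) = (∑ i, grad i * (x i : ℚ)) + B (fun i => (x i : ZMod p))

/-- View a natural-number vector as a real vector. -/
def natToR {d : ℕ} (x : Fin d → ℕ) : Fin d → ℝ :=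
  fun i => (x i : ℝ)

lemma quilt_nonpos {q C : ℚ} (h : ∀ n : ℕ, (n : ℚ) * q ≤ C) : q ≤ 0 := by
  by_contra hq
  push_neg at hq
  obtain ⟨n, hn⟩ := exists_nat_gt (C / q)
  have h2 := h n
  rw [div_lt_iff₀ hq] at hn
  linarith

lemma quilt_modeq_shift (p a b : ℕ) (hp : 0 < p) :
    (a + (p - a % p + b % p) % p) ≡ b [MOD p] := by
  have h1 : a % p ≤ p := le_of_lt (Nat.mod_lt _ hp)
  calc a + (p - a % p + b % p) % p
      ≡ a % p + (p - a % p + b % p) [MOD p] :=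
        Nat.ModEq.add (Nat.mod_modEq a p).symm (Nat.mod_modEq _ p)
    _ = p + b % p := by omega
    _ ≡ 0 + b [MOD p] := Nat.ModEq.add (Nat.modEq_zero_iff_dvd.2 dvd_rfl) (Nat.mod_modEq b p)
    _ = b := by omega

set_option maxHeartbeats 1000000 in
/-- **Determined regions have unique quilt-affine extensions.** Let `f : ℕ^d → ℕ`
be nondecreasing, `p > 0`, and let `D ⊆ ℝ^d_{≥0}` be a (nonempty at integer points)
convex polyhedron whose recession cone is full-dimensional.  If on each congruence
class mod `p` the restriction of `f` to `D` is rational affine (with gradient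
`grad a` and offset `off a` for the class of `a`), then all the gradients are equal
and there is a unique quilt-affine `g : ℕ^d → ℤ` agreeing with `f` on `D ∩ ℕ^d`. -/
theorem determined_region_unique_extension {d l : ℕ} (f : (Fin d → ℕ) → ℕ)
    (hf : Monotone f) (p : ℕ) (hp : 0 < p)
    (A : Fin l → Fin d → ℝ) (c : Fin l → ℝ) (D : Set (Fin d → ℝ))
    (hD : D = {x | ∀ k, c k ≤ ∑ i, A k i * x i})
    (hDpos : ∀ x ∈ D, ∀ i, 0 ≤ x i)
    (hDne : ∃ x : Fin d → ℕ, natToR x ∈ D)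
    (hrecc : affineSpan ℝ
      {y : Fin d → ℝ | ∀ x ∈ D, ∀ t : ℝ, 0 ≤ t → x + t • y ∈ D} = ⊤)
    (grad : (Fin d → ℕ) → Fin d → ℚ) (off : (Fin d → ℕ) → ℚ)
    (hagree : ∀ a x : Fin d → ℕ, natToR x ∈ D → (∀ i, x i ≡ a i [MOD p]) →
      (f x : ℚ) = (∑ i, grad a i * (x i : ℚ)) + off a) :
    (∀ a a' : Fin d → ℕ, grad a = grad a') ∧
    (∃! g : (Fin d → ℕ) → ℤ, QuiltAffine g ∧
      ∀ x : Fin d → ℕ, natToR x ∈ D → g x = (f x : ℤ)) := by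
  classical
  obtain ⟨x0, hx0⟩ := hDne
  have hDm : ∀ z : Fin d → ℝ, z ∈ D ↔ ∀ k, c k ≤ ∑ i, A k i * z i := by
    intro z; rw [hD]; exact Iff.rfl
  set R : Set (Fin d → ℝ) := {y | ∀ k, 0 ≤ ∑ i, A k i * y i} with hRdef
  have hRm : ∀ y : Fin d → ℝ, y ∈ R ↔ ∀ k, 0 ≤ ∑ i, A k i * y i := fun y => Iff.rfl
  have hsplit : ∀ (k : Fin l) (y z : Fin d → ℝ),
      (∑ i, A k i * (y + z) i) = (∑ i, A k i * y i) + ∑ i, A k i * z i := by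
    intro k y z
    simp [Pi.add_apply, mul_add, Finset.sum_add_distrib]
  have hsmul : ∀ (k : Fin l) (t : ℝ) (y : Fin d → ℝ),
      (∑ i, A k i * (t • y) i) = t * ∑ i, A k i * y i := by
    intro k t y
    rw [Finset.mul_sum]
    apply Finset.sum_congr rfl
    intro i _
    simp [Pi.smul_apply, smul_eq_mul]; ring
  have hadd : ∀ z ∈ D, ∀ r ∈ R, z + r ∈ D := by
    intro z hz r hr
    rw [hDm] at hz ⊢
    intro k
    rw [hsplit]
    have := (hRm r).1 hr k
    linarith [hz k]
  have hRsc : ∀ (t : ℝ), 0 ≤ t → ∀ r ∈ R, t • r ∈ R := by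
    intro t ht r hr
    rw [hRm]
    intro k
    rw [hsmul]
    exact mul_nonneg ht ((hRm r).1 hr k)
  have hRrec : {y : Fin d → ℝ | ∀ x ∈ D, ∀ t : ℝ, 0 ≤ t → x + t • y ∈ D} = R := by
    ext y
    simp only [Set.mem_setOf_eq]
    constructor
    · intro h
      rw [hRm]
      intro k
      by_contra hneg
      push_neg at hneg
      have hx0k : c k ≤ ∑ i, A k i * natToR x0 i := (hDm _).1 hx0 k
      set S := ∑ i, A k i * y i with hS
      set t := (∑ i, A k i * natToR x0 i - c k + 1) / (-S) with ht
      have ht0 : 0 ≤ t := div_nonneg (by linarith) (by linarith)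
      have hmem := (hDm _).1 (h _ hx0 t ht0) k
      rw [hsplit, hsmul] at hmem
      have hSne : -S ≠ 0 := by intro h; rw [neg_eq_zero] at h; linarith
      have htS' : t * (-S) = ∑ i, A k i * natToR x0 i - c k + 1 := by
        rw [ht]; exact div_mul_cancel₀ _ hSne
      have htS : t * S = -(∑ i, A k i * natToR x0 i - c k + 1) := by
        have : t * S = -(t * (-S)) := by ring
        rw [this, htS']
      rw [← hS] at hmem
      linarith
    · intro h x hxD t ht
      rw [hDm] at hxD ⊢
      intro k
      rw [hsplit, hsmul]
      have h1 := (hRm y).1 h k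
      nlinarith [hxD k, mul_nonneg ht h1]
  have hconv : Convex ℝ R := by
    intro y hy z hz a b ha hb hab
    rw [hRm]
    intro k
    rw [hsplit, hsmul, hsmul]
    exact add_nonneg (mul_nonneg ha ((hRm y).1 hy k)) (mul_nonneg hb ((hRm z).1 hz k))
  have hint : (interior R).Nonempty := by
    rw [hconv.interior_nonempty_iff_affineSpan_eq_top, ← hRrec]
    exact hrecc
  obtain ⟨y0, hy0i⟩ := hint
  obtain ⟨ε, hε, hball⟩ := Metric.isOpen_iff.1 isOpen_interior y0 hy0i
  have hy0R : y0 ∈ R := interior_subset hy0i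
  have hy0nn : ∀ i, 0 ≤ y0 i := by
    intro i
    by_contra hneg
    push_neg at hneg
    have hy0rec : ∀ x ∈ D, ∀ t : ℝ, 0 ≤ t → x + t • y0 ∈ D := by
      have : y0 ∈ {y : Fin d → ℝ | ∀ x ∈ D, ∀ t : ℝ, 0 ≤ t → x + t • y ∈ D} := by
        rw [hRrec]; exact hy0R
      exact this
    set t := (natToR x0 i + 1) / (-y0 i) with ht
    have hx0nn : (0:ℝ) ≤ natToR x0 i := by simp [natToR]
    have ht0 : 0 ≤ t := div_nonneg (by linarith) (by linarith)
    have hmem := hDpos _ (hy0rec _ hx0 t ht0) i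
    have hyne : -y0 i ≠ 0 := by intro h; rw [neg_eq_zero] at h; linarith
    have htv' : t * (-y0 i) = natToR x0 i + 1 := by
      rw [ht]; exact div_mul_cancel₀ _ hyne
    have htv : t * y0 i = -(natToR x0 i + 1) := by
      have : t * y0 i = -(t * (-y0 i)) := by ring
      rw [this, htv']
    have hmem' : 0 ≤ natToR x0 i + t * y0 i := by simpa [natToR] using hmem
    linarith
  set m : ℕ := ⌈2 / ε⌉₊ + 1 with hm
  have hm0 : 0 < (m : ℝ) := by
    have : 0 < m := Nat.succ_pos _
    exact_mod_cast this
  have hmε : 2 < (m : ℝ) * ε := by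
    have h1 : 2 / ε ≤ (⌈2 / ε⌉₊ : ℝ) := Nat.le_ceil _
    have h2 : 2 / ε < (m : ℝ) := by rw [hm]; push_cast; linarith
    rw [div_lt_iff₀ hε] at h2
    linarith
  set w : Fin d → ℕ := fun i => ⌊(m : ℝ) * y0 i⌋₊ with hw
  set δ : ℝ := (m : ℝ) * ε - 1 with hδdef
  have hδ0 : 1 < δ := by rw [hδdef]; linarith
  have hδpos : 0 < δ := by linarith
  have hwnear : ∀ i, |(w i : ℝ) - (m : ℝ) * y0 i| ≤ 1 := by
    intro i
    have h0 : 0 ≤ (m : ℝ) * y0 i := mul_nonneg (le_of_lt hm0) (hy0nn i)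
    have h1 : ((w i : ℕ) : ℝ) ≤ (m : ℝ) * y0 i := Nat.floor_le h0
    have h2 : (m : ℝ) * y0 i < (w i : ℕ) + 1 := Nat.lt_floor_add_one _
    rw [abs_le]
    constructor <;> simp only [hw] at * <;> linarith
  have hwball : ∀ u : Fin d → ℝ, (∀ i, |u i| < δ) → (natToR w + u) ∈ R := by
    intro u hu
    set z : Fin d → ℝ := fun i => ((w i : ℝ) + u i) / m with hz
    have hzball : z ∈ Metric.ball y0 ε := by
      rw [Metric.mem_ball, dist_pi_lt_iff hε]
      intro i
      rw [Real.dist_eq]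
      have he : z i - y0 i = ((w i : ℝ) - (m : ℝ) * y0 i + u i) / m := by
        rw [hz]; field_simp; ring
      rw [he, abs_div, abs_of_pos hm0, div_lt_iff₀ hm0]
      calc |(w i : ℝ) - (m : ℝ) * y0 i + u i|
          ≤ |(w i : ℝ) - (m : ℝ) * y0 i| + |u i| := abs_add_le _ _
        _ < 1 + δ := by linarith [hwnear i, hu i]
        _ = ε * m := by rw [hδdef]; ring
    have hzR : z ∈ R := interior_subset (hball hzball)
    have hrw : natToR w + u = (m : ℝ) • z := by
      funext i
      simp only [natToR, Pi.add_apply, Pi.smul_apply, smul_eq_mul, hz]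
      field_simp
    rw [hrw]
    exact hRsc _ (le_of_lt hm0) _ hzR
  have hwR : natToR w ∈ R := by
    have := hwball 0 (fun i => by simpa using hδpos)
    simpa using this
  have hdeep : ∀ z ∈ D, ∀ n : ℕ, 0 < n → ∀ s : Fin d → ℝ, (∀ i, |s i| < (n : ℝ) * δ) →
      z + ((n : ℝ) • natToR w + s) ∈ D := by
    intro z hz n hn s hs
    have hn' : (0 : ℝ) < n := by exact_mod_cast hn
    have he : (n : ℝ) • natToR w + s = (n : ℝ) • (natToR w + ((n : ℝ))⁻¹ • s) := by
      rw [smul_add, smul_smul]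
      rw [mul_inv_cancel₀ (ne_of_gt hn'), one_smul]
    rw [he]
    apply hadd z hz
    apply hRsc _ (le_of_lt hn')
    apply hwball
    intro i
    rw [Pi.smul_apply, smul_eq_mul, abs_mul, abs_inv, abs_of_pos hn']
    rw [inv_mul_lt_iff₀ hn']
    exact hs i
  have hcast : ∀ (u v : Fin d → ℕ) (k : ℕ),
      natToR (u + k • v) = natToR u + (k : ℝ) • natToR v := by
    intro u v k
    funext i
    simp only [natToR, Pi.add_apply, Pi.smul_apply, smul_eq_mul]
    push_cast
    ring
  have hND : ∀ x : Fin d → ℕ, ∃ N : ℕ, ∀ n, N ≤ n → natToR (x + (n * p) • w) ∈ D := by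
    intro x
    set M : ℝ := ∑ i, |(x i : ℝ) - natToR x0 i| with hM
    have hMi : ∀ i, |(x i : ℝ) - natToR x0 i| ≤ M := by
      intro i
      exact Finset.single_le_sum (f := fun j => |(x j : ℝ) - natToR x0 j|)
        (fun j _ => abs_nonneg _) (Finset.mem_univ i)
    have hM0 : 0 ≤ M := Finset.sum_nonneg (fun j _ => abs_nonneg _)
    refine ⟨⌈M / δ⌉₊ + 1, fun n hn => ?_⟩
    have hn1 : 1 ≤ n := le_trans (Nat.succ_le_succ (Nat.zero_le _)) hn
    have hnp : 0 < n * p := Nat.mul_pos hn1 hp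
    have hbig : M < ((n * p : ℕ) : ℝ) * δ := by
      have h1 : M / δ ≤ (⌈M / δ⌉₊ : ℝ) := Nat.le_ceil _
      have h2 : ((⌈M / δ⌉₊ + 1 : ℕ) : ℝ) ≤ (n : ℝ) := by exact_mod_cast hn
      have h3 : (n : ℝ) ≤ ((n * p : ℕ) : ℝ) := by
        exact_mod_cast Nat.le_mul_of_pos_right n hp
      have h4 : M / δ < ((n * p : ℕ) : ℝ) := by push_cast at h2 h3 ⊢; linarith
      rw [div_lt_iff₀ hδpos] at h4
      linarith
    have hmem := hdeep _ hx0 (n * p) hnp (natToR x - natToR x0)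
      (fun i => by
        have := hMi i
        simp only [Pi.sub_apply]
        exact lt_of_le_of_lt this hbig)
    have heqv : natToR (x + (n * p) • w)
        = natToR x0 + (((n * p : ℕ) : ℝ) • natToR w + (natToR x - natToR x0)) := by
      funext i
      simp only [natToR, Pi.add_apply, Pi.smul_apply, Pi.sub_apply, smul_eq_mul]
      push_cast
      ring
    rw [heqv]
    exact hmem
  choose NF hNF using hND
  have hmemD : ∀ (t : Fin d → ℕ) (k : ℕ), 0 < k → (∀ i, (t i : ℝ) < (k : ℝ) * δ) →
      natToR (x0 + t + k • w) ∈ D := by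
    intro t k hk ht
    have hmem := hdeep _ hx0 k hk (natToR t)
      (fun i => by
        rw [abs_of_nonneg (by simp [natToR] : (0:ℝ) ≤ natToR t i)]
        exact ht i)
    have heqv : natToR (x0 + t + k • w) = natToR x0 + ((k : ℝ) • natToR w + natToR t) := by
      funext i
      simp only [natToR, Pi.add_apply, Pi.smul_apply, smul_eq_mul]
      push_cast
      ring
    rw [heqv]
    exact hmem
  have hDadd : ∀ (x V : Fin d → ℕ), natToR V ∈ R → natToR x ∈ D → ∀ n : ℕ,
      natToR (x + n • V) ∈ D := by
    intro x V hV hx n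
    rw [hcast]
    exact hadd _ hx _ (hRsc _ (Nat.cast_nonneg n) _ hV)
  have hsumQ : ∀ (gq : Fin d → ℚ) (u : Fin d → ℕ) (k : ℕ) (v : Fin d → ℕ),
      (∑ i, gq i * (((u + k • v) i : ℕ) : ℚ))
        = (∑ i, gq i * (u i : ℚ)) + (k : ℚ) * ∑ i, gq i * (v i : ℚ) := by
    intro gq u k v
    rw [Finset.mul_sum, ← Finset.sum_add_distrib]
    apply Finset.sum_congr rfl
    intro i _
    simp only [Pi.add_apply, Pi.smul_apply, smul_eq_mul]
    push_cast
    ring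
  have hxmod : ∀ (x : Fin d → ℕ) (k : ℕ) (v : Fin d → ℕ) (i : Fin d),
      (x + (k * p) • v) i ≡ x i [MOD p] := by
    intro x k v i
    show ((x + (k * p) • v) i) % p = (x i) % p
    simp only [Pi.add_apply, Pi.smul_apply, smul_eq_mul]
    have he : x i + k * p * v i = x i + (k * v i) * p := by ring
    rw [he]
    exact Nat.add_mul_mod_self_right _ _ _
  -- gradient comparison
  have hcomp : ∀ a a' V : Fin d → ℕ, natToR V ∈ R →
      (∑ i, grad a i * (V i : ℚ)) ≤ ∑ i, grad a' i * (V i : ℚ) := by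
    intro a a' V hV
    set s : Fin d → ℕ := fun i => (p - a i % p + a' i % p) % p with hs
    set r : Fin d → ℕ := fun i => (p - x0 i % p + a i % p) % p with hr
    have hsm : ∀ i, a i + s i ≡ a' i [MOD p] := fun i => quilt_modeq_shift p (a i) (a' i) hp
    have hrm : ∀ i, x0 i + r i ≡ a i [MOD p] := fun i => quilt_modeq_shift p (x0 i) (a i) hp
    have hsd : ∀ i, s i < p := fun i => Nat.mod_lt _ hp
    have hrd : ∀ i, r i < p := fun i => Nat.mod_lt _ hp
    set N : ℕ := ⌈(2 * (p : ℝ)) / δ⌉₊ + 1 with hN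
    have hNp : 0 < N * p := Nat.mul_pos (Nat.succ_pos _) hp
    have hNδ : 2 * (p : ℝ) < ((N * p : ℕ) : ℝ) * δ := by
      have h1 : 2 * (p : ℝ) / δ ≤ (⌈(2 * (p : ℝ)) / δ⌉₊ : ℝ) := Nat.le_ceil _
      have h2 : (N : ℝ) ≤ ((N * p : ℕ) : ℝ) := by
        exact_mod_cast Nat.le_mul_of_pos_right N hp
      have h2' : (⌈(2 * (p : ℝ)) / δ⌉₊ : ℝ) + 1 ≤ (N : ℝ) := by
        rw [hN]; push_cast; linarith
      have h3 : 2 * (p : ℝ) / δ < ((N * p : ℕ) : ℝ) := by linarith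
      rw [div_lt_iff₀ hδpos] at h3
      linarith
    have hpR : (0 : ℝ) < p := by exact_mod_cast hp
    set x : Fin d → ℕ := x0 + r + (N * p) • w with hxdef
    have hxD : natToR x ∈ D := by
      apply hmemD r (N * p) hNp
      intro i
      have : (r i : ℝ) < p := by exact_mod_cast hrd i
      linarith
    have hx'D : natToR (x + s) ∈ D := by
      have he : x + s = x0 + (r + s) + (N * p) • w := by
        rw [hxdef]
        funext i
        simp only [Pi.add_apply, Pi.smul_apply, smul_eq_mul]
        ring
      rw [he]
      apply hmemD (r + s) (N * p) hNp
      intro i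
      have h1 : (r i : ℝ) < p := by exact_mod_cast hrd i
      have h2 : (s i : ℝ) < p := by exact_mod_cast hsd i
      have hNδ' := hNδ
      push_cast at hNδ' ⊢
      simp only [Pi.add_apply]
      push_cast
      linarith
    have hxa : ∀ i, x i ≡ a i [MOD p] := by
      intro i
      have h1 := hxmod (x0 + r) N w i
      exact h1.trans (hrm i)
    have hx'a' : ∀ i, (x + s) i ≡ a' i [MOD p] := by
      intro i
      have h1 : (x + s) i = x i + s i := rfl
      rw [h1]
      exact (Nat.ModEq.add (hxa i) (Nat.ModEq.refl (s i))).trans (hsm i)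
    have hva : ∀ n : ℕ, (f (x + (n * p) • V) : ℚ)
        = ((∑ i, grad a i * (x i : ℚ)) + off a)
          + ((n : ℚ) * p) * ∑ i, grad a i * (V i : ℚ) := by
      intro n
      have hmem : natToR (x + (n * p) • V) ∈ D := hDadd x V hV hxD (n * p)
      have hcl : ∀ i, (x + (n * p) • V) i ≡ a i [MOD p] :=
        fun i => (hxmod x n V i).trans (hxa i)
      rw [hagree a _ hmem hcl, hsumQ]
      push_cast
      ring
    have hva' : ∀ n : ℕ, (f ((x + s) + (n * p) • V) : ℚ)
        = ((∑ i, grad a' i * ((x + s) i : ℚ)) + off a')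
          + ((n : ℚ) * p) * ∑ i, grad a' i * (V i : ℚ) := by
      intro n
      have hmem : natToR ((x + s) + (n * p) • V) ∈ D := hDadd (x + s) V hV hx'D (n * p)
      have hcl : ∀ i, ((x + s) + (n * p) • V) i ≡ a' i [MOD p] :=
        fun i => (hxmod (x + s) n V i).trans (hx'a' i)
      rw [hagree a' _ hmem hcl, hsumQ]
      push_cast
      ring
    have hle : ∀ n : ℕ, f (x + (n * p) • V) ≤ f ((x + s) + (n * p) • V) := by
      intro n
      apply hf
      intro i
      simp only [Pi.add_apply]
      omega
    have key : ∀ n : ℕ, (n : ℚ) * ((p : ℚ) * ((∑ i, grad a i * (V i : ℚ))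
        - ∑ i, grad a' i * (V i : ℚ)))
        ≤ ((∑ i, grad a' i * ((x + s) i : ℚ)) + off a')
          - ((∑ i, grad a i * (x i : ℚ)) + off a) := by
      intro n
      have h3 : (f (x + (n * p) • V) : ℚ) ≤ (f ((x + s) + (n * p) • V) : ℚ) := by
        exact_mod_cast hle n
      rw [hva n, hva' n] at h3
      nlinarith [h3]
    have hq := quilt_nonpos key
    have hpQ : (0 : ℚ) < p := by exact_mod_cast hp
    nlinarith [hq]
  have heqsum : ∀ a a' V : Fin d → ℕ, natToR V ∈ R →
      (∑ i, grad a i * (V i : ℚ)) = ∑ i, grad a' i * (V i : ℚ) :=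
    fun a a' V hV => le_antisymm (hcomp a a' V hV) (hcomp a' a V hV)
  set Q : ℕ := ⌈1 / δ⌉₊ + 1 with hQ
  have hQ0 : (0 : ℝ) < Q := by
    have : 0 < Q := Nat.succ_pos _
    exact_mod_cast this
  have hQδ : 1 / (Q : ℝ) < δ := by
    have h1 : 1 / δ ≤ (⌈1 / δ⌉₊ : ℝ) := Nat.le_ceil _
    have h2 : 1 / δ < (Q : ℝ) := by rw [hQ]; push_cast; linarith
    rw [div_lt_iff₀ hδpos] at h2
    rw [div_lt_iff₀ hQ0]
    linarith [h2]
  have hQwcast : natToR (Q • w) = (Q : ℝ) • natToR w := by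
    funext i
    simp only [natToR, Pi.smul_apply, smul_eq_mul]
    push_cast
    ring
  have hQwR : natToR (Q • w) ∈ R := by
    rw [hQwcast]
    exact hRsc _ (le_of_lt hQ0) _ hwR
  set E : Fin d → Fin d → ℕ := fun i j => if j = i then 1 else 0 with hE
  have hEapp : ∀ i j, E i j = if j = i then 1 else 0 := fun i j => rfl
  have hQweR : ∀ i : Fin d, natToR (Q • w + E i) ∈ R := by
    intro i
    have hmem : (natToR w + fun j => if j = i then ((Q : ℝ))⁻¹ else 0) ∈ R := by
      apply hwball
      intro j
      by_cases h : j = i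
      · rw [if_pos h, abs_of_pos (inv_pos.2 hQ0), inv_eq_one_div]
        exact hQδ
      · rw [if_neg h, abs_zero]
        exact hδpos
    have he : natToR (Q • w + E i)
        = (Q : ℝ) • (natToR w + fun j => if j = i then ((Q : ℝ))⁻¹ else 0) := by
      funext j
      show (((Q • w + E i : Fin d → ℕ) j : ℕ) : ℝ)
          = (Q : ℝ) * ((w j : ℝ) + (if j = i then ((Q : ℝ))⁻¹ else 0))
      have e1 : (Q • w + E i : Fin d → ℕ) j = Q * w j + E i j := rfl
      rw [e1, hEapp]
      by_cases h : j = i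
      · rw [if_pos h, if_pos h]
        have hQne : (Q : ℝ) ≠ 0 := ne_of_gt hQ0
        push_cast
        field_simp
      · rw [if_neg h, if_neg h]
        push_cast
        ring
    rw [he]
    exact hRsc _ (le_of_lt hQ0) _ hmem
  have hQsum : ∀ gq : Fin d → ℚ,
      (∑ j, gq j * (((Q • w) j : ℕ) : ℚ)) = (Q : ℚ) * ∑ j, gq j * (w j : ℚ) := by
    intro gq
    rw [Finset.mul_sum]
    apply Finset.sum_congr rfl
    intro j _
    simp only [Pi.smul_apply, smul_eq_mul]
    push_cast
    ring
  have hsingle : ∀ (gq : Fin d → ℚ) (i : Fin d),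
      (∑ j, gq j * (((Q • w + E i) j : ℕ) : ℚ))
        = (Q : ℚ) * (∑ j, gq j * (w j : ℚ)) + gq i := by
    intro gq i
    have he : ∀ j, gq j * (((Q • w + E i) j : ℕ) : ℚ)
        = (Q : ℚ) * (gq j * (w j : ℚ)) + (if j = i then gq j else 0) := by
      intro j
      have e1 : (Q • w + E i) j = Q * w j + E i j := rfl
      rw [e1, hEapp]
      by_cases h : j = i
      · rw [if_pos h, if_pos h]; push_cast; ring
      · rw [if_neg h, if_neg h]; push_cast; ring
    rw [Finset.sum_congr rfl (fun j _ => he j), Finset.sum_add_distrib, ← Finset.mul_sum]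
    congr 1
    simp
  have hgrad : ∀ a a' : Fin d → ℕ, grad a = grad a' := by
    intro a a'
    funext i
    have h1 := heqsum a a' (Q • w) hQwR
    have h2 := heqsum a a' (Q • w + E i) (hQweR i)
    rw [hsingle, hsingle] at h2
    rw [hQsum, hQsum] at h1
    linarith
  refine ⟨hgrad, ?_⟩
  -- common gradient
  set G : Fin d → ℚ := grad x0 with hG
  have hdiff : ∀ x y : Fin d → ℕ, natToR x ∈ D → natToR y ∈ D →
      (∀ i, x i ≡ y i [MOD p]) →
      (f x : ℚ) - f y = ∑ i, G i * ((x i : ℚ) - (y i : ℚ)) := by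
    intro x y hxm hym hcl
    have h1 := hagree x x hxm (fun i => Nat.ModEq.refl _)
    have h2 := hagree x y hym (fun i => (hcl i).symm)
    rw [hgrad x x0] at h1 h2
    rw [← hG] at h1 h2
    rw [h1, h2]
    have h3 : (∑ i, G i * ((x i : ℚ) - (y i : ℚ)))
        = (∑ i, G i * (x i : ℚ)) - ∑ i, G i * (y i : ℚ) := by
      rw [← Finset.sum_sub_distrib]
      exact Finset.sum_congr rfl (fun j _ => by ring)
    rw [h3]
    ring
  have honemul : ∀ (v : Fin d → ℕ), p • v = (1 * p) • v := by
    intro v; rw [one_mul]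
  have hGnn : ∀ i, 0 ≤ G i := by
    intro i
    have hA1 : natToR (x0 + p • (Q • w)) ∈ D := hDadd x0 _ hQwR hx0 p
    have hB1 : natToR (x0 + p • (Q • w + E i)) ∈ D := hDadd x0 _ (hQweR i) hx0 p
    have hle : f (x0 + p • (Q • w)) ≤ f (x0 + p • (Q • w + E i)) := by
      apply hf
      intro j
      show x0 j + p * ((Q • w : Fin d → ℕ) j) ≤ x0 j + p * ((Q • w : Fin d → ℕ) j + E i j)
      exact Nat.add_le_add_left (Nat.mul_le_mul le_rfl (Nat.le_add_right _ _)) _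
    have hcl : ∀ j, (x0 + p • (Q • w + E i)) j ≡ (x0 + p • (Q • w)) j [MOD p] := by
      intro j
      have h1 := hxmod x0 1 (Q • w + E i) j
      have h2 := hxmod x0 1 (Q • w) j
      rw [← honemul] at h1 h2
      exact h1.trans h2.symm
    have hd := hdiff _ _ hB1 hA1 hcl
    have he : ∀ j, G j * (((x0 + p • (Q • w + E i)) j : ℚ)
        - ((x0 + p • (Q • w)) j : ℚ)) = if j = i then (p : ℚ) * G j else 0 := by
      intro j
      have e1 : (x0 + p • (Q • w + E i)) j = x0 j + p * (Q * w j + E i j) := rfl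
      have e2 : (x0 + p • (Q • w)) j = x0 j + p * (Q * w j) := rfl
      rw [e1, e2, hEapp]
      by_cases h : j = i
      · rw [if_pos h, if_pos h]; push_cast; ring
      · rw [if_neg h, if_neg h]; push_cast; ring
    have hsum2 : ∑ j, G j * (((x0 + p • (Q • w + E i)) j : ℚ)
        - ((x0 + p • (Q • w)) j : ℚ)) = (p : ℚ) * G i := by
      rw [Finset.sum_congr rfl (fun j _ => he j)]
      simp
    rw [hsum2] at hd
    have hfle : (f (x0 + p • (Q • w)) : ℚ) ≤ f (x0 + p • (Q • w + E i)) := by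
      exact_mod_cast hle
    have hpQ : (0 : ℚ) < p := by exact_mod_cast hp
    nlinarith
  set PZ : ℤ := (f (x0 + p • w) : ℤ) - (f x0 : ℤ) with hPZdef
  have hPZ : (PZ : ℚ) = (p : ℚ) * ∑ i, G i * (w i : ℚ) := by
    have hmem : natToR (x0 + p • w) ∈ D := hDadd x0 w hwR hx0 p
    have hcl : ∀ i, (x0 + p • w) i ≡ x0 i [MOD p] := by
      intro i
      have h1 := hxmod x0 1 w i
      rw [← honemul] at h1
      exact h1
    have hd := hdiff _ _ hmem hx0 hcl
    have hsum2 : ∑ i, G i * (((x0 + p • w) i : ℚ) - (x0 i : ℚ))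
        = (p : ℚ) * ∑ i, G i * (w i : ℚ) := by
      rw [Finset.mul_sum]
      apply Finset.sum_congr rfl
      intro i _
      simp only [Pi.add_apply, Pi.smul_apply, smul_eq_mul]
      push_cast
      ring
    rw [hsum2] at hd
    rw [hPZdef]
    push_cast
    -- (no cast adjustment needed)
    linarith
  set g : (Fin d → ℕ) → ℤ := fun x => (f (x + (NF x * p) • w) : ℤ) - (NF x : ℤ) * PZ with hgdef
  have hlin : ∀ (x : Fin d → ℕ) (m₁ m₂ : ℕ),
      (∑ i, G i * (((x + (m₁ * p) • w) i : ℚ) - ((x + (m₂ * p) • w) i : ℚ)))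
        = ((m₁ : ℚ) - m₂) * PZ := by
    intro x m₁ m₂
    calc (∑ i, G i * (((x + (m₁ * p) • w) i : ℚ) - ((x + (m₂ * p) • w) i : ℚ)))
        = ∑ i, ((m₁ : ℚ) - m₂) * ((p : ℚ) * (G i * (w i : ℚ))) := by
          apply Finset.sum_congr rfl
          intro i _
          simp only [Pi.add_apply, Pi.smul_apply, smul_eq_mul]
          push_cast
          ring
      _ = ((m₁ : ℚ) - m₂) * ((p : ℚ) * ∑ i, G i * (w i : ℚ)) := by
          rw [← Finset.mul_sum, ← Finset.mul_sum]
      _ = ((m₁ : ℚ) - m₂) * PZ := by rw [hPZ]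
  have hgval : ∀ (x : Fin d → ℕ) (n : ℕ), natToR (x + (n * p) • w) ∈ D →
      (g x : ℚ) = (f (x + (n * p) • w) : ℚ) - (n : ℚ) * PZ := by
    intro x n hmem
    set n' := max n (NF x) with hn'
    have hmem' : natToR (x + (n' * p) • w) ∈ D := hNF x _ (le_max_right _ _)
    have hmemN : natToR (x + (NF x * p) • w) ∈ D := hNF x _ le_rfl
    have h1 := hdiff _ _ hmem' hmem
      (fun i => (hxmod x n' w i).trans ((hxmod x n w i).symm))
    have h2 := hdiff _ _ hmem' hmemN
      (fun i => (hxmod x n' w i).trans ((hxmod x (NF x) w i).symm))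
    rw [hlin x n' n] at h1
    rw [hlin x n' (NF x)] at h2
    rw [hgdef]
    push_cast
    linarith
  have hgf : ∀ x : Fin d → ℕ, natToR x ∈ D → g x = (f x : ℤ) := by
    intro x hx
    have h0 : natToR (x + (0 * p) • w) ∈ D := by
      have he : x + (0 * p) • w = x := by
        funext i
        simp
      rw [he]
      exact hx
    have := hgval x 0 h0
    have he : x + (0 * p) • w = x := by funext i; simp
    rw [he] at this
    simp only [Nat.cast_zero, zero_mul, sub_zero] at this
    exact_mod_cast this
  have hgdiff : ∀ x y : Fin d → ℕ, (∀ i, x i ≡ y i [MOD p]) →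
      (g x : ℚ) - g y = ∑ i, G i * ((x i : ℚ) - (y i : ℚ)) := by
    intro x y hcl
    set n := max (NF x) (NF y) with hn
    have hx' := hNF x n (le_max_left _ _)
    have hy' := hNF y n (le_max_right _ _)
    have h1 := hgval x n hx'
    have h2 := hgval y n hy'
    have h3 := hdiff _ _ hx' hy'
      (fun i => (hxmod x n w i).trans ((hcl i).trans (hxmod y n w i).symm))
    have h4 : (∑ i, G i * (((x + (n * p) • w) i : ℚ) - ((y + (n * p) • w) i : ℚ)))
        = ∑ i, G i * ((x i : ℚ) - (y i : ℚ)) := by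
      apply Finset.sum_congr rfl
      intro i _
      simp only [Pi.add_apply, Pi.smul_apply, smul_eq_mul]
      push_cast
      ring
    rw [h4] at h3
    linarith
  have hgmono : Monotone g := by
    intro x y hxy
    set n := max (NF x) (NF y) with hn
    have hx' := hNF x n (le_max_left _ _)
    have hy' := hNF y n (le_max_right _ _)
    have h1 := hgval x n hx'
    have h2 := hgval y n hy'
    have h3 : f (x + (n * p) • w) ≤ f (y + (n * p) • w) := by
      apply hf
      intro i
      simp only [Pi.add_apply]
      exact Nat.add_le_add (hxy i) le_rfl
    have h4 : (f (x + (n * p) • w) : ℚ) ≤ f (y + (n * p) • w) := by exact_mod_cast h3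
    have h5 : (g x : ℚ) ≤ g y := by rw [h1, h2]; linarith
    exact_mod_cast h5
  haveI : NeZero p := ⟨hp.ne'⟩
  set B : (Fin d → ZMod p) → ℚ := fun v =>
    ((g (fun i => (v i).val) : ℚ) - ∑ i, G i * (((v i).val : ℕ) : ℚ)) with hB
  have hform : ∀ x : Fin d → ℕ,
      (g x : ℚ) = (∑ i, G i * (x i : ℚ)) + B (fun i => (x i : ZMod p)) := by
    intro x
    set y : Fin d → ℕ := fun i => ((x i : ZMod p)).val with hy
    have hcl : ∀ i, x i ≡ y i [MOD p] := by
      intro i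
      rw [hy]
      simp only [ZMod.val_natCast]
      exact (Nat.mod_modEq _ p).symm
    have h1 := hgdiff x y hcl
    have h2 : (∑ i, G i * ((x i : ℚ) - (y i : ℚ)))
        = (∑ i, G i * (x i : ℚ)) - ∑ i, G i * (y i : ℚ) := by
      rw [← Finset.sum_sub_distrib]
      apply Finset.sum_congr rfl
      intro i _
      ring
    rw [h2] at h1
    have hBv : B (fun i => (x i : ZMod p)) = (g y : ℚ) - ∑ i, G i * (y i : ℚ) := rfl
    rw [hBv]
    linarith
  refine ⟨g, ⟨⟨hgmono, p, hp, G, B, hGnn, hform⟩, fun x hx => hgf x hx⟩, ?_⟩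
  rintro g' ⟨⟨hg'mono, p', hp', γ, B', hγnn, hform'⟩, hg'f⟩
  funext x
  have hg'z : ∀ n : ℕ, (g' (x + ((n * p') * p) • w) : ℚ)
      = (g' x : ℚ) + (n : ℚ) * ((p' : ℚ) * p * ∑ i, γ i * (w i : ℚ)) := by
    intro n
    have e1 := hform' (x + ((n * p') * p) • w)
    have e2 := hform' x
    have hsame : (fun i => (((x + ((n * p') * p) • w) i : ℕ) : ZMod p'))
        = fun i => ((x i : ℕ) : ZMod p') := by
      funext i
      simp only [Pi.add_apply, Pi.smul_apply, smul_eq_mul]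
      push_cast
      have : ((p' : ZMod p')) = 0 := by
        exact_mod_cast ZMod.natCast_self p'
      rw [this]
      ring
    rw [e1, hsame, hsumQ, e2]
    push_cast
    ring
  have hgz : ∀ n : ℕ, (g (x + ((n * p') * p) • w) : ℚ)
      = (g x : ℚ) + (n : ℚ) * ((p' : ℚ) * p * ∑ i, G i * (w i : ℚ)) := by
    intro n
    have h1 := hgdiff (x + ((n * p') * p) • w) x
      (fun i => hxmod x (n * p') w i)
    have h2 : (∑ i, G i * ((((x + ((n * p') * p) • w) i : ℕ) : ℚ) - (x i : ℚ)))
        = (n : ℚ) * ((p' : ℚ) * p * ∑ i, G i * (w i : ℚ)) := by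
      calc (∑ i, G i * ((((x + ((n * p') * p) • w) i : ℕ) : ℚ) - (x i : ℚ)))
          = ∑ i, (n : ℚ) * ((p' : ℚ) * p * (G i * (w i : ℚ))) := by
            apply Finset.sum_congr rfl
            intro i _
            simp only [Pi.add_apply, Pi.smul_apply, smul_eq_mul]
            push_cast
            ring
        _ = (n : ℚ) * ((p' : ℚ) * p * ∑ i, G i * (w i : ℚ)) := by
            rw [← Finset.mul_sum, ← Finset.mul_sum]
    rw [h2] at h1
    linarith
  have hmemz : ∀ n : ℕ, NF x ≤ n → natToR (x + ((n * p') * p) • w) ∈ D := by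
    intro n hn
    apply hNF x (n * p')
    calc NF x ≤ n := hn
      _ ≤ n * p' := Nat.le_mul_of_pos_right n hp'
  have hkey : ∀ n : ℕ, NF x ≤ n →
      (g' x : ℚ) + (n : ℚ) * ((p' : ℚ) * p * ∑ i, γ i * (w i : ℚ))
        = (g x : ℚ) + (n : ℚ) * ((p' : ℚ) * p * ∑ i, G i * (w i : ℚ)) := by
    intro n hn
    have hmem := hmemz n hn
    have h1 : g' (x + ((n * p') * p) • w) = g (x + ((n * p') * p) • w) := by
      rw [hg'f _ hmem, hgf _ hmem]
    have h2 := hg'z n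
    have h3 := hgz n
    rw [h1] at h2
    rw [h3] at h2
    linarith
  have hk1 := hkey (NF x) le_rfl
  have hk2 := hkey (NF x + 1) (Nat.le_succ _)
  have hceq : (p' : ℚ) * p * ∑ i, γ i * (w i : ℚ)
      = (p' : ℚ) * p * ∑ i, G i * (w i : ℚ) := by
    push_cast at hk2
    linarith
  rw [hceq] at hk1
  have : (g' x : ℚ) = g x := by linarith
  exact_mod_cast this
end

section
/- Let f : ℕ^d → ℕ be obliviously-computable, let D ⊆ ℝ^d_{≥0} be a convex polyhedron whose recession cone recc(D) has dimension d, and let g : ℕ^d → ℤ be a quilt-affine function with g(x) = f(x) for all x ∈ D ∩ ℕ^d. Then g eventually dominates f: there exists n ∈ ℕ^d such that f(x) ≤ g(x) for all x ≥ n (pointwise). -/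
/-!
Along a ray `z + j • v` pick configurations `Q j` reachable from the initial ones and carrying
the correct output. By Dickson's lemma `Q j ≤ Q (j + m)` for some `j` and `m > 0`; since the
output is never consumed, the surplus `e = Q (j + m) - Q j` is regenerated by every further
input `m • v`, on top of any input `x ≥ z + j • v`, so `f x + t * e(Y) ≤ f (x + (t * m) • v)`.
Taking `v ∈ p ℕ^d` in the interior of the recession cone, `g` is exactly affine along `v`, the
ray from an integer point of `D` stays in `D`, so `f = g` there pins `e(Y)` to the slope of `g`,
and every ray `x + ℕ v` eventually enters `D`, where `f = g` turns the inequality into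
`f x ≤ g x`.
-/

/-- A chemical reaction network with species type `σ`, designated input species
`inputs i` for each of the `d` inputs, an output species, and a leader species. -/
structure CRN (d : ℕ) (σ : Type) [Fintype σ] [DecidableEq σ] where
  /-- Each reaction is a pair `(r, p)` of reactant counts and product counts. -/
  reactions : Finset ((σ → ℕ) × (σ → ℕ))
  inputs : Fin d → σ
  output : σ
  leader : σ
  inputs_inj : Function.Injective inputs
  leader_not_input : ∀ i, inputs i ≠ leader

namespace CRN

variable {d : ℕ} {σ : Type} [Fintype σ] [DecidableEq σ]

/-- One reaction step: some reaction `(r, p)` with `r ≤ c` pointwise fires,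
yielding `c - r + p`. -/
def Step (C : CRN d σ) (c c' : σ → ℕ) : Prop :=
  ∃ rp ∈ C.reactions, rp.1 ≤ c ∧ c' = c - rp.1 + rp.2

/-- Reachability by a finite sequence of reaction steps. -/
def Reachable (C : CRN d σ) : (σ → ℕ) → (σ → ℕ) → Prop :=
  Relation.ReflTransGen C.Step

/-- The initial configuration encoding input `x`: count `x i` of input species
`inputs i`, count 1 of the leader, count 0 of everything else. -/
def init (C : CRN d σ) (x : Fin d → ℕ) : σ → ℕ :=
  fun s => (∑ i, if C.inputs i = s then x i else 0) + (if s = C.leader then 1 else 0)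

/-- A configuration is stable if the output count never changes from it. -/
def Stable (C : CRN d σ) (c : σ → ℕ) : Prop :=
  ∀ c', C.Reachable c c' → c' C.output = c C.output

/-- `C` stably computes `f` if from every configuration reachable from an initial
configuration, a stable configuration with correct output count is reachable. -/
def StablyComputes (C : CRN d σ) (f : (Fin d → ℕ) → ℕ) : Prop :=
  ∀ x c, C.Reachable (C.init x) c →
    ∃ o, C.Reachable c o ∧ C.Stable o ∧ o C.output = f x

/-- A CRN is output-oblivious if the output species is never a reactant. -/
def OutputOblivious (C : CRN d σ) : Prop :=
  ∀ rp ∈ C.reactions, rp.1 C.output = 0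

/-- A CRN is output-monotonic if no reaction decreases the output species count. -/
def OutputMonotonic (C : CRN d σ) : Prop :=
  ∀ rp ∈ C.reactions, rp.1 C.output ≤ rp.2 C.output

end CRN

/-- `f` is obliviously-computable if some output-oblivious CRN stably computes it. -/
def ObliviouslyComputable {d : ℕ} (f : (Fin d → ℕ) → ℕ) : Prop :=
  ∃ (n : ℕ) (C : CRN d (Fin n)), C.OutputOblivious ∧ C.StablyComputes f

namespace CRN

variable {d : ℕ} {σ : Type} [Fintype σ] [DecidableEq σ] {C : CRN d σ}

theorem Step.add_right {c c' : σ → ℕ} (h : C.Step c c') (e : σ → ℕ) :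
    C.Step (c + e) (c' + e) := by
  obtain ⟨rp, hmem, hle, rfl⟩ := h
  refine ⟨rp, hmem, hle.trans le_self_add, funext fun s => ?_⟩
  have hs : rp.1 s ≤ c s := hle s
  simp only [Pi.add_apply, Pi.sub_apply]
  omega

theorem Reachable.add_right {c c' : σ → ℕ} (h : C.Reachable c c') (e : σ → ℕ) :
    C.Reachable (c + e) (c' + e) :=
  Relation.ReflTransGen.lift (· + e) (fun _ _ hs => hs.add_right e) _ _ h

theorem Reachable.of_eq {c c' : σ → ℕ} (h : c = c') : C.Reachable c c' :=
  h ▸ Relation.ReflTransGen.refl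

theorem OutputOblivious.output_le_of_reachable (hC : C.OutputOblivious) {c c' : σ → ℕ}
    (h : C.Reachable c c') : c C.output ≤ c' C.output := by
  induction h with
  | refl => exact le_rfl
  | tail _ hstep ih =>
    obtain ⟨rp, hmem, -, rfl⟩ := hstep
    simp only [Pi.add_apply, Pi.sub_apply, hC rp hmem]
    omega

theorem StablyComputes.output_le (hC : C.OutputOblivious) {f : (Fin d → ℕ) → ℕ}
    (hf : C.StablyComputes f) {x : Fin d → ℕ} {c : σ → ℕ} (h : C.Reachable (C.init x) c) :
    c C.output ≤ f x := by
  obtain ⟨o, hco, -, ho⟩ := hf x c h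
  exact ho ▸ hC.output_le_of_reachable hco

def inputMap (C : CRN d σ) : (Fin d → ℕ) →+ (σ → ℕ) where
  toFun u s := ∑ i, if C.inputs i = s then u i else 0
  map_zero' := by ext; simp
  map_add' u w := by ext; simp [ite_add_zero, Finset.sum_add_distrib]

theorem init_add (x u : Fin d → ℕ) : C.init (x + u) = C.init x + C.inputMap u := by
  ext s
  simp only [init, inputMap, AddMonoidHom.coe_mk, ZeroHom.coe_mk, Pi.add_apply, ite_add_zero,
    Finset.sum_add_distrib]
  ring

theorem Reachable.add_inputMap_nsmul {c e : σ → ℕ} {w : Fin d → ℕ}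
    (h : C.Reachable (c + C.inputMap w) (c + e)) (t : ℕ) :
    C.Reachable (c + C.inputMap (t • w)) (c + t • e) := by
  induction t with
  | zero => exact Reachable.of_eq (by simp)
  | succ t ih =>
    rw [succ_nsmul' w, map_add, ← add_assoc, succ_nsmul, ← add_assoc]
    refine (h.add_right _).trans ?_
    rw [add_right_comm]
    exact ih.add_right e

theorem reachable_of_chain {Q : ℕ → σ → ℕ} {w : Fin d → ℕ}
    (hQ : ∀ j, C.Reachable (Q j + C.inputMap w) (Q (j + 1))) (a b : ℕ) :
    C.Reachable (Q a + C.inputMap (b • w)) (Q (a + b)) := by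
  induction b with
  | zero => exact Reachable.of_eq (by simp)
  | succ b ih =>
    rw [succ_nsmul, map_add, ← add_assoc]
    exact (ih.add_right _).trans (hQ (a + b))

theorem StablyComputes.exists_chain {f : (Fin d → ℕ) → ℕ} (hf : C.StablyComputes f)
    (z v : Fin d → ℕ) :
    ∃ Q : ℕ → σ → ℕ,
      (∀ j, C.Reachable (C.init (z + j • v)) (Q j) ∧ Q j C.output = f (z + j • v)) ∧
      ∀ j, C.Reachable (Q j + C.inputMap v) (Q (j + 1)) := by
  classical
  let P (j : ℕ) (c : σ → ℕ) : Prop :=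
    C.Reachable (C.init (z + j • v)) c ∧ c C.output = f (z + j • v)
  have hstep : ∀ j c, ∃ c', P j c → C.Reachable (c + C.inputMap v) c' ∧ P (j + 1) c' := by
    intro j c
    by_cases hc : P j c
    · have hr : C.Reachable (C.init (z + (j + 1) • v)) (c + C.inputMap v) := by
        rw [succ_nsmul, ← add_assoc, init_add]
        exact hc.1.add_right _
      obtain ⟨o, hco, -, ho⟩ := hf _ _ hr
      exact ⟨o, fun _ => ⟨hco, hr.trans hco, ho⟩⟩
    · exact ⟨c, fun h => absurd h hc⟩
  choose next hnext using hstep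
  obtain ⟨c₀, hc₀, -, ho₀⟩ := hf (z + 0 • v) _ Relation.ReflTransGen.refl
  let Q (j : ℕ) : σ → ℕ := Nat.rec (motive := fun _ => σ → ℕ) c₀ next j
  have hQ : ∀ j, P j (Q j) := by
    intro j
    induction j with
    | zero => exact ⟨hc₀, ho₀⟩
    | succ j ih => exact (hnext j (Q j) ih).2
  exact ⟨Q, hQ, fun j => (hnext j (Q j) (hQ j)).1⟩

theorem OutputOblivious.exists_pump (hC : C.OutputOblivious) {f : (Fin d → ℕ) → ℕ}
    (hf : C.StablyComputes f) (z v : Fin d → ℕ) :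
    ∃ j m e : ℕ, 0 < m ∧ f (z + (j + m) • v) = f (z + j • v) + e ∧
      ∀ x, z + j • v ≤ x → ∀ t : ℕ, f x + t * e ≤ f (x + (t * m) • v) := by
  obtain ⟨Q, hQ, hlink⟩ := hf.exists_chain z v
  obtain ⟨j, j', hjj', hle⟩ := wellQuasiOrdered_le Q
  obtain ⟨m, rfl⟩ : ∃ m, j' = j + m := ⟨j' - j, by omega⟩
  obtain ⟨e, he⟩ := le_iff_exists_add.mp hle
  have hpump : C.Reachable (Q j + C.inputMap (m • v)) (Q j + e) :=
    he ▸ reachable_of_chain hlink j m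
  refine ⟨j, m, e C.output, by omega, ?_, fun x hx t => ?_⟩
  · rw [← (hQ (j + m)).2, ← (hQ j).2, he, Pi.add_apply]
  obtain ⟨u, rfl⟩ := le_iff_exists_add.mp hx
  have hbase : C.Reachable (C.init (z + j • v + u)) (Q j + C.inputMap u) := by
    rw [init_add]
    exact (hQ j).1.add_right _
  obtain ⟨o, hro, -, ho⟩ := hf _ _ hbase
  have hrun : C.Reachable (C.init (z + j • v + u + (t * m) • v)) (o + t • e) := by
    rw [init_add, init_add, add_right_comm, mul_smul]
    refine (((hQ j).1.add_right _).add_right _).trans ?_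
    refine ((hpump.add_inputMap_nsmul t).add_right _).trans ?_
    rw [add_right_comm]
    exact hro.add_right _
  simpa [ho] using hf.output_le hC hrun

end CRN

open Filter Topology

def recessionCone {E : Type*} [AddCommGroup E] [Module ℝ E] (D : Set E) : ConvexCone ℝ E where
  carrier := {y | ∀ x ∈ D, ∀ t : ℝ, 0 ≤ t → x + t • y ∈ D}
  smul_mem' c hc y hy x hx t ht := by
    rw [smul_smul]
    exact hy x hx _ (mul_nonneg ht hc.le)
  add_mem' y hy z hz x hx t ht := by
    rw [smul_add, ← add_assoc]
    exact hz _ (hy x hx t ht) t ht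

theorem recessionCone_nonneg {ι : Type*} {D : Set (ι → ℝ)} (hD : ∀ x ∈ D, ∀ i, 0 ≤ x i)
    {x : ι → ℝ} (hx : x ∈ D) {y : ι → ℝ} (hy : y ∈ recessionCone D) : 0 ≤ y := by
  refine fun i => le_of_not_gt fun hyi => ?_
  replace hyi : y i < 0 := hyi
  have hxi : 0 ≤ x i := hD x hx i
  have h := hD _ (hy x hx ((x i + 1) / -y i) (div_nonneg (by linarith) (by linarith))) i
  have hcancel : (x i + 1) / -y i * y i = -(x i + 1) := by
    field_simp [hyi.ne]
  simp only [Pi.add_apply, Pi.smul_apply, smul_eq_mul, hcancel] at h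
  linarith

section ConvexCone

open scoped Pointwise

variable {E : Type*} [AddCommGroup E] [Module ℝ E] [TopologicalSpace E] (S : ConvexCone ℝ E)

theorem ConvexCone.smul_mem_interior [ContinuousConstSMul ℝ E] {c : ℝ} (hc : 0 < c) {y : E}
    (hy : y ∈ interior (S : Set E)) : c • y ∈ interior (S : Set E) := by
  have hsub : c • interior (S : Set E) ⊆ interior (S : Set E) := by
    rw [← interior_smul₀ hc.ne']
    exact interior_mono fun _ ⟨z, hz, h⟩ => h ▸ S.smul_mem hc hz
  exact hsub (Set.smul_mem_smul_set hy)

theorem ConvexCone.eventually_smul_add_mem [ContinuousAdd E] [ContinuousSMul ℝ E] {y : E}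
    (hy : y ∈ interior (S : Set E)) (w : E) : ∀ᶠ s : ℝ in atTop, s • y + w ∈ S := by
  have hlim : Tendsto (fun s : ℝ => y + s⁻¹ • w) atTop (𝓝 y) := by
    simpa using tendsto_const_nhds.add ((tendsto_inv_atTop_zero (𝕜 := ℝ)).smul_const w)
  filter_upwards [hlim (mem_interior_iff_mem_nhds.mp hy), eventually_gt_atTop 0] with s hs hpos
  simpa [smul_add, smul_smul, hpos.ne'] using S.smul_mem hpos hs

end ConvexCone

theorem exists_dvd_natToR_mem_interior {d : ℕ} {S : ConvexCone ℝ (Fin d → ℝ)} {y : Fin d → ℝ}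
    (hy : y ∈ interior (S : Set (Fin d → ℝ))) (hy0 : 0 ≤ y) {p : ℕ} (hp : 0 < p) :
    ∃ v : Fin d → ℕ, (∀ i, p ∣ v i) ∧ natToR v ∈ interior (S : Set (Fin d → ℝ)) := by
  have hlim : Tendsto (fun N : ℝ => fun i => (⌊y i * N⌋₊ : ℝ) / N) atTop (𝓝 y) :=
    tendsto_pi_nhds.mpr fun i => tendsto_nat_floor_mul_div_atTop (hy0 i)
  obtain ⟨N, hN, hNpos⟩ :=
    ((hlim.eventually (isOpen_interior.mem_nhds hy)).and (eventually_gt_atTop 0)).exists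
  refine ⟨fun i => p * ⌊y i * N⌋₊, fun i => dvd_mul_right _ _, ?_⟩
  convert S.smul_mem_interior (mul_pos (Nat.cast_pos.mpr hp) hNpos) hN using 1
  ext i
  simp only [natToR, Nat.cast_mul, Pi.smul_apply, smul_eq_mul]
  field_simp

theorem natToR_add_nsmul_mem {d : ℕ} {D : Set (Fin d → ℝ)} {v z : Fin d → ℕ}
    (hv : natToR v ∈ recessionCone D) (hz : natToR z ∈ D) (k : ℕ) :
    natToR (z + k • v) ∈ D := by
  convert hv _ hz k k.cast_nonneg using 1
  ext
  simp [natToR]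

theorem eventually_natToR_add_nsmul_mem {d : ℕ} {D : Set (Fin d → ℝ)} {v x₀ : Fin d → ℕ}
    (hv : natToR v ∈ interior (recessionCone D : Set (Fin d → ℝ))) (hx₀ : natToR x₀ ∈ D)
    (x : Fin d → ℕ) : ∀ᶠ t : ℕ in atTop, natToR (x + t • v) ∈ D := by
  filter_upwards [tendsto_natCast_atTop_atTop.eventually
    ((recessionCone D).eventually_smul_add_mem hv (natToR x - natToR x₀))] with t ht
  convert ht _ hx₀ 1 zero_le_one using 1
  ext
  simp only [natToR, one_smul, Pi.add_apply, Pi.smul_apply, Pi.sub_apply, smul_eq_mul,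
    Nat.cast_add, Nat.cast_mul]
  ring

theorem QuiltAffine.exists_period {d : ℕ} {g : (Fin d → ℕ) → ℤ} (hg : QuiltAffine g) :
    ∃ p : ℕ, 0 < p ∧ ∀ v : Fin d → ℕ, (∀ i, p ∣ v i) →
      ∀ x (k : ℕ), g (x + k • v) = g x + k * (g v - g 0) := by
  obtain ⟨-, p, hp, grad, B, -, hform⟩ := hg
  refine ⟨p, hp, fun v hv => ?_⟩
  have hres : ∀ x (k : ℕ), (fun i => (((x + k • v) i : ℕ) : ZMod p)) = fun i => (x i : ZMod p) := by
    intro x k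
    funext i
    obtain ⟨c, hc⟩ := hv i
    simp [hc]
  have hlin : ∀ x (k : ℕ), (g (x + k • v) : ℚ) = g x + k * ∑ i, grad i * v i := by
    intro x k
    rw [hform, hform, hres, Finset.mul_sum, add_right_comm, ← Finset.sum_add_distrib]
    congr 1
    refine Finset.sum_congr rfl fun i _ => ?_
    simp only [Pi.add_apply, Pi.smul_apply, smul_eq_mul, Nat.cast_add, Nat.cast_mul]
    ring
  have h1 := hlin 0 1
  simp only [one_smul, zero_add, Nat.cast_one, one_mul] at h1
  intro x k
  qify
  rw [hlin]
  linear_combination -(k : ℚ) * h1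

theorem determined_extension_eventually_dominates_general {d : ℕ}
    (f : (Fin d → ℕ) → ℕ) (hf : ObliviouslyComputable f)
    (D : Set (Fin d → ℝ))
    (hDpos : ∀ x ∈ D, ∀ i, 0 ≤ x i)
    (hDne : ∃ x : Fin d → ℕ, natToR x ∈ D)
    (hrecc : affineSpan ℝ
      {y : Fin d → ℝ | ∀ x ∈ D, ∀ t : ℝ, 0 ≤ t → x + t • y ∈ D} = ⊤)
    (g : (Fin d → ℕ) → ℤ) (hg : QuiltAffine g)
    (hagree : ∀ x : Fin d → ℕ, natToR x ∈ D → g x = (f x : ℤ)) :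
    ∃ n : Fin d → ℕ, ∀ x : Fin d → ℕ, n ≤ x → (f x : ℤ) ≤ g x := by
  obtain ⟨_, C, hC, hCf⟩ := hf
  obtain ⟨x₀, hx₀⟩ := hDne
  obtain ⟨p, hp, hperiod⟩ := hg.exists_period
  obtain ⟨y, hy⟩ := (recessionCone D).convex.interior_nonempty_iff_affineSpan_eq_top.mpr hrecc
  obtain ⟨v, hvp, hv⟩ := exists_dvd_natToR_mem_interior hy
    (recessionCone_nonneg hDpos hx₀ (interior_subset hy)) hp
  obtain ⟨j, m, e, hm, he, hpump⟩ := hC.exists_pump hCf x₀ v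
  have hgf (k : ℕ) : g (x₀ + k • v) = f (x₀ + k • v) :=
    hagree _ (natToR_add_nsmul_mem (interior_subset hv) hx₀ k)
  have hslope : (e : ℤ) = m * (g v - g 0) := by
    have h := hperiod v hvp (x₀ + j • v) m
    rw [add_assoc, ← add_smul, hgf, hgf, he] at h
    push_cast at h
    linarith
  refine ⟨x₀ + j • v, fun x hx => ?_⟩
  obtain ⟨N, hN⟩ := eventually_atTop.mp (eventually_natToR_add_nsmul_mem hv hx₀ x)
  have hfg := hperiod v hvp x (N * m)
  rw [hagree _ (hN (N * m) (Nat.le_mul_of_pos_right N hm))] at hfg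
  have hgrowth : (f x : ℤ) + N * e ≤ f (x + (N * m) • v) := mod_cast hpump x hx N
  rw [hfg, hslope] at hgrowth
  push_cast at hgrowth
  linarith

/-- **Determined extensions eventually dominate.** Let `f : ℕ^d → ℕ` be
obliviously-computable, let `D ⊆ ℝ^d_{≥0}` be a (nonempty at integer points)
convex polyhedron whose recession cone is full-dimensional, and let `g` be a
quilt-affine function with `g = f` on `D ∩ ℕ^d`.  Then `g` eventually dominates
`f`: there is `n ∈ ℕ^d` with `f(x) ≤ g(x)` for all `x ≥ n` pointwise. -/
theorem determined_extension_eventually_dominates {d l : ℕ}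
    (f : (Fin d → ℕ) → ℕ) (hf : ObliviouslyComputable f)
    (A : Fin l → Fin d → ℝ) (c : Fin l → ℝ) (D : Set (Fin d → ℝ))
    (hD : D = {x | ∀ k, c k ≤ ∑ i, A k i * x i})
    (hDpos : ∀ x ∈ D, ∀ i, 0 ≤ x i)
    (hDne : ∃ x : Fin d → ℕ, natToR x ∈ D)
    (hrecc : affineSpan ℝ
      {y : Fin d → ℝ | ∀ x ∈ D, ∀ t : ℝ, 0 ≤ t → x + t • y ∈ D} = ⊤)
    (g : (Fin d → ℕ) → ℤ) (hg : QuiltAffine g)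
    (hagree : ∀ x : Fin d → ℕ, natToR x ∈ D → g x = (f x : ℤ)) :
    ∃ n : Fin d → ℕ, ∀ x : Fin d → ℕ, n ≤ x → (f x : ℤ) ≤ g x :=
  determined_extension_eventually_dominates_general f hf D hDpos hDne hrecc g hg hagree
end
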